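/- For all even integers n and all integers m, L_n * L_{n+2m} = 5 * F_{n+m}^2 + L_m^2. -/

import Mathlib

def lucasNat : ℕ → ℕ
  | 0 => 2
  | 1 => 1
  | (n + 2) => lucasNat (n + 1) + lucasNat n

noncomputable def F (n : ℤ) : ℤ :=
  if 0 ≤ n then Nat.fib n.toNat else (-1) ^ ((-n).toNat + 1) * Nat.fib (-n).toNat

noncomputable def L (n : ℤ) : ℤ :=
  if 0 ≤ n then lucasNat n.toNat else (-1) ^ (-n).toNat * lucasNat (-n).toNat

lemma F_ofNat (j : ℕ) : F (j : ℤ) = Nat.fib j := by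
  simp [F]

lemma F_neg (j : ℕ) : F (-(j : ℤ)) = (-1) ^ (j + 1) * Nat.fib j := by
  cases j with
  | zero => simp [F]
  | succ j =>
    have h : ¬ (0 : ℤ) ≤ -((j : ℤ) + 1) := by omega
    simp only [F]
    push_cast
    rw [if_neg h]
    norm_num

lemma L_ofNat (j : ℕ) : L (j : ℤ) = lucasNat j := by
  simp [L]

lemma L_neg (j : ℕ) : L (-(j : ℤ)) = (-1) ^ j * lucasNat j := by
  cases j with
  | zero => simp [L]
  | succ j =>
    have h : ¬ (0 : ℤ) ≤ -((j : ℤ) + 1) := by omega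
    simp only [L]
    push_cast
    rw [if_neg h]
    norm_num


lemma F0 : F 0 = 0 := by rw [show (0:ℤ) = ((0:ℕ):ℤ) by norm_num, F_ofNat]; rfl
lemma F1 : F 1 = 1 := by rw [show (1:ℤ) = ((1:ℕ):ℤ) by norm_num, F_ofNat]; rfl
lemma F2 : F 2 = 1 := by rw [show (2:ℤ) = ((2:ℕ):ℤ) by norm_num, F_ofNat]; rfl
lemma Fm1 : F (-1) = 1 := by rw [show (-1:ℤ) = -((1:ℕ):ℤ) by norm_num, F_neg]; rfl
lemma L0 : L 0 = 2 := by rw [show (0:ℤ) = ((0:ℕ):ℤ) by norm_num, L_ofNat]; rfl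
lemma L1 : L 1 = 1 := by rw [show (1:ℤ) = ((1:ℕ):ℤ) by norm_num, L_ofNat]; rfl

lemma F_rec (k : ℤ) : F (k + 2) = F (k + 1) + F k := by
  obtain ⟨j, rfl | rfl⟩ := Int.eq_nat_or_neg k
  · have e2 : ((j : ℤ) + 2) = ((j + 2 : ℕ) : ℤ) := by push_cast; ring
    have e1 : ((j : ℤ) + 1) = ((j + 1 : ℕ) : ℤ) := by push_cast; ring
    rw [e2, e1, F_ofNat, F_ofNat, F_ofNat, Nat.fib_add_two]
    push_cast; ring
  · rcases j with _ | _ | j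
    · norm_num [F0, F1, F2]
    · norm_num [F0, F1, Fm1]
    · have e2 : (-((j + 2 : ℕ) : ℤ)) + 2 = -((j : ℕ) : ℤ) := by push_cast; ring
      have e1 : (-((j + 2 : ℕ) : ℤ)) + 1 = -((j + 1 : ℕ) : ℤ) := by push_cast; ring
      rw [e2, e1, F_neg, F_neg, F_neg, Nat.fib_add_two]
      push_cast; ring

lemma L_rec (k : ℤ) : L (k + 2) = L (k + 1) + L k := by
  obtain ⟨j, rfl | rfl⟩ := Int.eq_nat_or_neg k
  · have e2 : ((j : ℤ) + 2) = ((j + 2 : ℕ) : ℤ) := by push_cast; ring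
    have e1 : ((j : ℤ) + 1) = ((j + 1 : ℕ) : ℤ) := by push_cast; ring
    rw [e2, e1, L_ofNat, L_ofNat, L_ofNat, show lucasNat (j+2) = lucasNat (j+1) + lucasNat j from rfl]
    push_cast; ring
  · rcases j with _ | _ | j
    · norm_num [L, lucasNat]; rfl
    · norm_num [L, lucasNat]
    · have e2 : (-((j + 2 : ℕ) : ℤ)) + 2 = -((j : ℕ) : ℤ) := by push_cast; ring
      have e1 : (-((j + 2 : ℕ) : ℤ)) + 1 = -((j + 1 : ℕ) : ℤ) := by push_cast; ring
      rw [e2, e1, L_neg, L_neg, L_neg, show lucasNat (j+2) = lucasNat (j+1) + lucasNat j from rfl]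
      push_cast; ring

/-- Two sequences satisfying the Fibonacci recurrence over ℤ that agree at 0 and 1 agree everywhere. -/
lemma fibLike_ext {f g : ℤ → ℤ} (hf : ∀ k, f (k + 2) = f (k + 1) + f k)
    (hg : ∀ k, g (k + 2) = g (k + 1) + g k) (h0 : f 0 = g 0) (h1 : f 1 = g 1) :
    ∀ k, f k = g k := by
  have key : ∀ k : ℤ, f k = g k ∧ f (k + 1) = g (k + 1) := by
    intro k
    induction k using Int.induction_on with
    | zero => exact ⟨h0, h1⟩
    | succ i ih =>
      refine ⟨ih.2, ?_⟩
      have := hf i; have := hg i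
      have e : (i : ℤ) + 1 + 1 = i + 2 := by ring
      rw [e, hf i, hg i, ih.1, ih.2]
    | pred i ih =>
      have e : (-(i : ℤ) - 1) + 1 = -i := by ring
      refine ⟨?_, by rw [e]; exact ih.1⟩
      have hfr := hf (-(i : ℤ) - 1)
      have hgr := hg (-(i : ℤ) - 1)
      have e2 : (-(i : ℤ) - 1) + 2 = -i + 1 := by ring
      rw [e2, e] at hfr hgr
      have := ih.1; have := ih.2
      omega
  exact fun k => (key k).1

lemma L_eq_F (k : ℤ) : L k = F (k + 1) + F (k - 1) := by
  have := fibLike_ext (f := L) (g := fun k => F (k + 1) + F (k - 1)) L_rec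
    (fun k => by
      have h1 := F_rec (k + 1)
      have h2 := F_rec (k - 1)
      rw [show k + 2 + 1 = k + 1 + 2 by ring, show k + 2 - 1 = k - 1 + 2 by ring,
        h1, h2]
      ring_nf)
    (by norm_num [L0, F1, Fm1])
    (by norm_num [L1, F2, F0])
  exact this k

lemma F_add (b : ℤ) : ∀ a : ℤ, F (a + b + 1) = F (a + 1) * F (b + 1) + F a * F b := by
  have := fibLike_ext (f := fun a => F (a + b + 1))
    (g := fun a => F (a + 1) * F (b + 1) + F a * F b)
    (fun k => by
      have h := F_rec (k + b + 1)
      rw [show k + 2 + b + 1 = k + b + 1 + 2 by ring, h,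
        show k + b + 1 + 1 = k + 1 + b + 1 by ring]
      try ring)
    (fun k => by
      have h1 := F_rec (k + 1)
      have h2 := F_rec k
      rw [show k + 2 + 1 = k + 1 + 2 by ring, h1, h2]
      ring)
    (by simp only [zero_add]; norm_num [F0, F1])
    (by
      have h := F_rec b
      rw [show (1:ℤ) + b + 1 = b + 2 by ring, h]
      norm_num [F1, F2])
  exact this

/-- the "Cassini determinant" -/
noncomputable def D (k : ℤ) : ℤ := F (k + 1) ^ 2 - F (k + 1) * F k - F k ^ 2

lemma D_step (k : ℤ) : D k = - D (k - 1) := by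
  unfold D
  have h := F_rec (k - 1)
  rw [show k - 1 + 2 = k + 1 by ring, show k - 1 + 1 = k by ring] at h
  rw [h]
  ring

lemma D_even : ∀ t : ℤ, D (2 * t) = 1 := by
  intro t
  induction t using Int.induction_on with
  | zero =>
    unfold D
    norm_num [F0, F1]
  | succ i ih =>
    have h1 := D_step (2 * ((i : ℤ) + 1))
    have h2 := D_step (2 * ((i : ℤ) + 1) - 1)
    rw [show 2 * ((i:ℤ) + 1) - 1 - 1 = 2 * (i:ℤ) by ring] at h2
    rw [h1, h2, ih]; ring
  | pred i ih =>
    have h1 := D_step (2 * (-(i : ℤ)))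
    have h2 := D_step (2 * (-(i : ℤ)) - 1)
    rw [show 2 * (-(i:ℤ)) - 1 - 1 = 2 * (-(i:ℤ) - 1) by ring] at h2
    rw [h2] at h1
    have : D (2 * (-(i:ℤ) - 1)) = D (2 * (-(i:ℤ))) := by rw [h1]; ring
    rw [this, ih]

theorem stmt9 (n m : ℤ) (hn : Even n) : L n * L (n + 2 * m) = 5 * F (n + m) ^ 2 + L m ^ 2 := by
  set a := F n with ha
  set b := F (n + 1) with hb
  set c := F m with hc
  set d := F (m + 1) with hd
  -- F (n - 1) = b - a
  have hrecn := F_rec (n - 1)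
  rw [show n - 1 + 2 = n + 1 by ring, show n - 1 + 1 = n by ring] at hrecn
  have hFn1 : F (n - 1) = b - a := by omega
  have hrecm := F_rec (m - 1)
  rw [show m - 1 + 2 = m + 1 by ring, show m - 1 + 1 = m by ring] at hrecm
  have hFm1 : F (m - 1) = d - c := by omega
  -- L n and L m
  have hLn : L n = 2 * b - a := by rw [L_eq_F, hFn1]; ring
  have hLm : L m = 2 * d - c := by rw [L_eq_F, hFm1]; ring
  -- F (n + m)
  have hFnm : F (n + m) = a * d + (b - a) * c := by
    have h := F_add m (n - 1)
    rw [show n - 1 + m + 1 = n + m by ring, show n - 1 + 1 = n by ring, hFn1] at h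
    rw [h]; try ring
  -- F (2m) and F (2m + 1)
  have hF2m : F (2 * m) = c * (2 * d - c) := by
    have h := F_add m (m - 1)
    rw [show m - 1 + m + 1 = 2 * m by ring, show m - 1 + 1 = m by ring, hFm1] at h
    rw [h]; try ring
  have hF2m1 : F (2 * m + 1) = c ^ 2 + d ^ 2 := by
    have h := F_add m m
    rw [show m + m + 1 = 2 * m + 1 by ring] at h
    rw [h]; try ring
  -- F (n + 2m) and F (n + 2m + 1)
  have hFn2m : F (n + 2 * m) = a * (c ^ 2 + d ^ 2) + (b - a) * (c * (2 * d - c)) := by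
    have h := F_add (2 * m - 1) n
    rw [show n + (2 * m - 1) + 1 = n + 2 * m by ring, show 2 * m - 1 + 1 = 2 * m by ring] at h
    have hrec2m := F_rec (2 * m - 1)
    rw [show 2 * m - 1 + 2 = 2 * m + 1 by ring, show 2 * m - 1 + 1 = 2 * m by ring] at hrec2m
    have hF2mm1 : F (2 * m - 1) = F (2 * m + 1) - F (2 * m) := by omega
    rw [h, hF2mm1, hF2m, hF2m1]; ring
  have hFn2m1 : F (n + 2 * m + 1) = b * (c ^ 2 + d ^ 2) + a * (c * (2 * d - c)) := by
    have h := F_add (2 * m) n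
    rw [show n + 2 * m + 1 = n + 2 * m + 1 by ring] at h
    rw [h, hF2m, hF2m1]; try ring
  -- L (n + 2m)
  have hLn2m : L (n + 2 * m) = 2 * F (n + 2 * m + 1) - F (n + 2 * m) := by
    rw [L_eq_F]
    have h := F_rec (n + 2 * m - 1)
    rw [show n + 2 * m - 1 + 2 = n + 2 * m + 1 by ring,
      show n + 2 * m - 1 + 1 = n + 2 * m by ring] at h
    omega
  -- Cassini for even n
  obtain ⟨t, ht⟩ := hn
  have hD : b ^ 2 - b * a - a ^ 2 = 1 := by
    have := D_even t
    rw [show 2 * t = n by omega] at this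
    unfold D at this
    rw [← hb, ← ha] at this
    linarith
  rw [hLn, hLm, hLn2m, hFn2m1, hFn2m, hFnm]
  linear_combination (2 * d - c) ^ 2 * hD
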